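/- Let H : E → ℝ be smooth and let ζ₁, ζ₂ be smooth vector fields on E with L_{ζ₁} α_H = 0, L_{ζ₂} α_H = 0, and [ζ₁, ζ₂] = 0. For k = 1, 2 let τ_k : E → ℝ be the first (time) component of ζ_k and set ζ̃_k = ζ_k − τ_k · Z_H. Then [Z_H, ζ̃₁] = 0, [Z_H, ζ̃₂] = 0, and [ζ̃₁, ζ̃₂] = 0 everywhere on E. -/

import Mathlib

noncomputable section
open scoped ContDiff

/-- The extended phase space `E = ℝ × ℝⁿ × ℝⁿ`, with points `x = (t, q, p)`. -/
abbrev EE (n : ℕ) : Type := ℝ × (Fin n → ℝ) × (Fin n → ℝ)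

/-- The Poincaré–Cartan 1-form `α_H = p dq − H dt`:
`α_H(x)(τ̂, ξ̂, η̂) = ∑ i, pᵢ ξ̂ᵢ − H(x) τ̂`. -/
def pcForm {n : ℕ} (H : EE n → ℝ) (x : EE n) : EE n →L[ℝ] ℝ :=
  (∑ i, x.2.2 i • ((ContinuousLinearMap.proj i).comp
      ((ContinuousLinearMap.fst ℝ (Fin n → ℝ) (Fin n → ℝ)).comp
        (ContinuousLinearMap.snd ℝ ℝ ((Fin n → ℝ) × (Fin n → ℝ))))))
    - H x • ContinuousLinearMap.fst ℝ ℝ ((Fin n → ℝ) × (Fin n → ℝ))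

/-- The vector field `Z_H(x) = (1, ∂H/∂p(x), −∂H/∂q(x))` of Hamilton's equations. -/
def ZH {n : ℕ} (H : EE n → ℝ) (x : EE n) : EE n :=
  (1, fun i => fderiv ℝ H x (0, 0, Pi.single i 1),
      fun i => - fderiv ℝ H x (0, Pi.single i 1, 0))

/-- The Lie derivative of a 1-form `α` along a vector field `ζ`:
`(L_ζ α)(x)(v) = (Dα(x)(ζ(x)))(v) + α(x)(Dζ(x)(v))`. -/
def lieDeriv {n : ℕ} (ζ : EE n → EE n) (α : EE n → (EE n →L[ℝ] ℝ)) (x : EE n) :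
    EE n →L[ℝ] ℝ :=
  fderiv ℝ α x (ζ x) + (α x).comp (fderiv ℝ ζ x)

/-- The exterior derivative of a 1-form:
`dα(x)(u,v) = (Dα(x)u)(v) − (Dα(x)v)(u)`. -/
def extDerivEE {n : ℕ} (α : EE n → (EE n →L[ℝ] ℝ)) (x u v : EE n) : ℝ :=
  fderiv ℝ α x u v - fderiv ℝ α x v u

/-- The Lie bracket of vector fields: `[X,Y](x) = DY(x)(X(x)) − DX(x)(Y(x))`. -/
def vbracket {n : ℕ} (X Y : EE n → EE n) (x : EE n) : EE n :=
  fderiv ℝ Y x (X x) - fderiv ℝ X x (Y x)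

/-!
Write `ω = dα_H`. Cartan's formula `L_ζ α = ι_ζ dα + d(α(ζ))` turns `L_ζ α_H = 0` into
`ι_ζ ω = -d(α_H(ζ))`, so `ι_ζ ω` is closed; as `ι_{Z_H} ω = 0`, also `ι_{ζ̃} ω = ι_ζ ω` is closed.
For vector fields `X, Y` with `ι_X ω` and `ι_Y ω` closed, `dω = 0` gives
`ι_{[X,Y]} ω = -d(ω(X, Y))`. Now `ω(Z_H, ζ̃ₖ) = 0`, and `ω(ζ̃₁, ζ̃₂) = ω(ζ₁, ζ₂)` has differential
`-ι_{[ζ₁,ζ₂]} ω = 0`, so all three brackets lie in `ker ω = ℝ Z_H`. Since `Z_H` and `ζ̃ₖ` have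
constant time components (`1` and `0`), the brackets have zero time component, so they vanish.
-/

open VectorField

section

variable {𝕜 E F : Type*} [NontriviallyNormedField 𝕜] [NormedAddCommGroup E] [NormedSpace 𝕜 E]
  [NormedAddCommGroup F] [NormedSpace 𝕜 F] {X Y : E → E} {x : E}

theorem fderiv_fderiv_apply {f : E → F} (hf : DifferentiableAt 𝕜 (fderiv 𝕜 f) x) (u v : E) :
    fderiv 𝕜 (fun y ↦ fderiv 𝕜 f y v) x u = fderiv 𝕜 (fderiv 𝕜 f) x u v := by
  simp [fderiv_clm_apply hf (differentiableAt_const v)]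

theorem apply_lieBracket_eq_zero_of_apply_eq (L : E →L[𝕜] F) {a b : F}
    (hX : DifferentiableAt 𝕜 X x) (hY : DifferentiableAt 𝕜 Y x) (hLX : ∀ y, L (X y) = a)
    (hLY : ∀ y, L (Y y) = b) :
    L (lieBracket 𝕜 X Y x) = 0 := by
  have key {Z : E → E} {c : F} (hZ : DifferentiableAt 𝕜 Z x) (hLZ : ∀ y, L (Z y) = c) (u : E) :
      L (fderiv 𝕜 Z x u) = 0 := by
    have h : HasFDerivAt (fun y ↦ L (Z y)) (L.comp (fderiv 𝕜 Z x)) x :=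
      L.hasFDerivAt.comp x hZ.hasFDerivAt
    rw [funext hLZ] at h
    exact congrArg (· u) (h.unique (hasFDerivAt_const c x))
  simp [lieBracket_eq, key hX hLX, key hY hLY]

end

namespace OneForm

variable {𝕜 E : Type*} [NontriviallyNormedField 𝕜] [NormedAddCommGroup E] [NormedSpace 𝕜 E]

def exteriorDeriv (α : E → E →L[𝕜] 𝕜) (x : E) : E →L[𝕜] E →L[𝕜] 𝕜 :=
  fderiv 𝕜 α x - (fderiv 𝕜 α x).flip

def IsClosedAt (β : E → E →L[𝕜] 𝕜) (x : E) : Prop :=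
  ∀ u v, fderiv 𝕜 (fun y ↦ β y v) x u = fderiv 𝕜 (fun y ↦ β y u) x v

variable {α : E → E →L[𝕜] 𝕜} {X Y : E → E} {x : E}

@[simp]
theorem exteriorDeriv_apply (y a b : E) :
    exteriorDeriv α y a b = fderiv 𝕜 α y a b - fderiv 𝕜 α y b a := rfl

theorem exteriorDeriv_apply_swap (y a b : E) :
    exteriorDeriv α y a b = -exteriorDeriv α y b a := by
  simp only [exteriorDeriv_apply, neg_sub]

theorem fderiv_fderiv_apply_apply (hα : DifferentiableAt 𝕜 (fderiv 𝕜 α) x)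
    (hX : DifferentiableAt 𝕜 X x) (hY : DifferentiableAt 𝕜 Y x) (u : E) :
    fderiv 𝕜 (fun y ↦ fderiv 𝕜 α y (X y) (Y y)) x u =
      fderiv 𝕜 α x (fderiv 𝕜 X x u) (Y x) + fderiv 𝕜 α x (X x) (fderiv 𝕜 Y x u) +
        fderiv 𝕜 (fderiv 𝕜 α) x u (X x) (Y x) := by
  rw [fderiv_clm_apply (hα.clm_apply hX) hY, fderiv_clm_apply hα hX]
  simp only [add_apply, ContinuousLinearMap.comp_apply, ContinuousLinearMap.flip_apply]
  ring

theorem fderiv_exteriorDeriv_apply_apply (hα : DifferentiableAt 𝕜 (fderiv 𝕜 α) x)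
    (hX : DifferentiableAt 𝕜 X x) (hY : DifferentiableAt 𝕜 Y x) (u : E) :
    fderiv 𝕜 (fun y ↦ exteriorDeriv α y (X y) (Y y)) x u =
      exteriorDeriv α x (fderiv 𝕜 X x u) (Y x) + exteriorDeriv α x (X x) (fderiv 𝕜 Y x u) +
        fderiv 𝕜 (fderiv 𝕜 α) x u (X x) (Y x) - fderiv 𝕜 (fderiv 𝕜 α) x u (Y x) (X x) := by
  simp only [exteriorDeriv_apply]
  rw [fderiv_fun_sub ((hα.clm_apply hX).clm_apply hY) ((hα.clm_apply hY).clm_apply hX),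
    sub_apply, fderiv_fderiv_apply_apply hα hX hY,
    fderiv_fderiv_apply_apply hα hY hX]
  ring

theorem exteriorDeriv_lieBracket (hα : DifferentiableAt 𝕜 (fderiv 𝕜 α) x)
    (hαs : IsSymmSndFDerivAt 𝕜 α x) (hX : DifferentiableAt 𝕜 X x) (hY : DifferentiableAt 𝕜 Y x)
    (hXc : IsClosedAt (fun y ↦ exteriorDeriv α y (X y)) x)
    (hYc : IsClosedAt (fun y ↦ exteriorDeriv α y (Y y)) x) :
    exteriorDeriv α x (lieBracket 𝕜 X Y x) =
      -fderiv 𝕜 (fun y ↦ exteriorDeriv α y (X y) (Y y)) x := by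
  ext v
  have hXv := hXc (Y x) v
  have hYv := hYc (X x) v
  simp only [fderiv_exteriorDeriv_apply_apply hα hX (differentiableAt_const _),
    fderiv_exteriorDeriv_apply_apply hα hY (differentiableAt_const _), fderiv_fun_const,
    Pi.zero_apply, zero_apply, map_zero, add_zero] at hXv hYv
  -- `d(dα) = 0` enters only through this symmetry of `D²α`.
  have hT : ∀ a b c, fderiv 𝕜 (fderiv 𝕜 α) x a b c = fderiv 𝕜 (fderiv 𝕜 α) x b a c :=
    fun a b c ↦ congrArg (· c) (hαs a b)
  rw [neg_apply, fderiv_exteriorDeriv_apply_apply hα hX hY, lieBracket_eq]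
  simp only [map_sub, sub_apply, exteriorDeriv_apply] at hXv hYv ⊢
  linear_combination hYv - hXv + hT (Y x) (X x) v - hT (Y x) v (X x) + hT (X x) v (Y x)

theorem exteriorDeriv_apply_add_fderiv (hα : DifferentiableAt 𝕜 α x)
    (hX : DifferentiableAt 𝕜 X x) :
    exteriorDeriv α x (X x) + fderiv 𝕜 (fun y ↦ α y (X y)) x =
      fderiv 𝕜 α x (X x) + (α x).comp (fderiv 𝕜 X x) := by
  ext v
  simp [fderiv_clm_apply hα hX]

theorem isClosedAt_exteriorDeriv_apply_of_lie_eq_zero {n : WithTop ℕ∞} (hα : ContDiff 𝕜 n α)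
    (hX : ContDiff 𝕜 n X) (hn : minSmoothness 𝕜 2 ≤ n)
    (hL : ∀ y, fderiv 𝕜 α y (X y) + (α y).comp (fderiv 𝕜 X y) = 0) (x : E) :
    IsClosedAt (fun y ↦ exteriorDeriv α y (X y)) x := by
  have h2 : 2 ≤ n := le_minSmoothness.trans hn
  have h0 : n ≠ 0 := (two_pos.trans_le h2).ne'
  have hF : ContDiff 𝕜 n fun y ↦ α y (X y) := hα.clm_apply hX
  have hcartan (y : E) : exteriorDeriv α y (X y) = -fderiv 𝕜 (fun y ↦ α y (X y)) y :=
    eq_neg_of_add_eq_zero_left <| (exteriorDeriv_apply_add_fderiv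
      ((hα.differentiable h0) y) ((hX.differentiable h0) y)).trans (hL y)
  have hF' : DifferentiableAt 𝕜 (fderiv 𝕜 fun y ↦ α y (X y)) x :=
    ((hF.fderiv_right (m := 1) h2).differentiable one_ne_zero) x
  intro u v
  simp only [hcartan, neg_apply, fderiv_fun_neg, fderiv_fderiv_apply hF' u,
    fderiv_fderiv_apply hF' v, hF.contDiffAt.isSymmSndFDerivAt hn u v]

end OneForm

section PhaseSpace

open OneForm

variable {n : ℕ} {H : EE n → ℝ} {x : EE n}

theorem fderiv_pcForm_apply (hH : DifferentiableAt ℝ H x) (u v : EE n) :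
    fderiv ℝ (pcForm H) x u v = ∑ i, u.2.2 i * v.2.1 i - fderiv ℝ H x u * v.1 := by
  have h : HasFDerivAt (pcForm H) _ x :=
    (HasFDerivAt.fun_sum fun i _ ↦ ((ContinuousLinearMap.proj i).comp
      ((ContinuousLinearMap.snd ℝ (Fin n → ℝ) (Fin n → ℝ)).comp
        (ContinuousLinearMap.snd ℝ ℝ ((Fin n → ℝ) × (Fin n → ℝ))))).hasFDerivAt.smul_const
          _).sub
      (hH.hasFDerivAt.smul_const (ContinuousLinearMap.fst ℝ ℝ ((Fin n → ℝ) × (Fin n → ℝ))))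
  simp [h.fderiv]

theorem exteriorDeriv_pcForm_apply (hH : DifferentiableAt ℝ H x) (u v : EE n) :
    exteriorDeriv (pcForm H) x u v =
      ∑ i, (u.2.2 i * v.2.1 i - v.2.2 i * u.2.1 i) - fderiv ℝ H x u * v.1 +
        fderiv ℝ H x v * u.1 := by
  simp only [exteriorDeriv_apply, fderiv_pcForm_apply hH, Finset.sum_sub_distrib]
  ring

theorem EE.clm_apply_eq_sum (L : EE n →L[ℝ] ℝ) (w : EE n) :
    L w = w.1 * L (1, 0, 0) + ∑ i, w.2.1 i * L (0, Pi.single i 1, 0) +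
      ∑ i, w.2.2 i * L (0, 0, Pi.single i 1) := by
  have hw : w = w.1 • ((1, 0, 0) : EE n) + ∑ i, w.2.1 i • ((0, Pi.single i 1, 0) : EE n) +
      ∑ i, w.2.2 i • ((0, 0, Pi.single i 1) : EE n) := by
    refine Prod.ext ?_ (Prod.ext (funext fun j ↦ ?_) (funext fun j ↦ ?_)) <;>
      simp [Prod.fst_sum, Prod.snd_sum, Pi.single_apply]
  conv_lhs => rw [hw]
  simp only [map_add, map_sum, map_smul, smul_eq_mul]

theorem exteriorDeriv_pcForm_ZH (hH : DifferentiableAt ℝ H x) :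
    exteriorDeriv (pcForm H) x (ZH H x) = 0 := by
  refine ContinuousLinearMap.ext fun v ↦ ?_
  rw [exteriorDeriv_pcForm_apply hH, EE.clm_apply_eq_sum (fderiv ℝ H x) v,
    EE.clm_apply_eq_sum (fderiv ℝ H x) (ZH H x)]
  simp [ZH, Finset.sum_sub_distrib, mul_comm]
  ring

theorem eq_smul_ZH_of_exteriorDeriv_pcForm_eq_zero (hH : DifferentiableAt ℝ H x) {u : EE n}
    (hu : exteriorDeriv (pcForm H) x u = 0) : u = u.1 • ZH H x := by
  have hq (j : Fin n) := congrArg (· (0, 0, Pi.single j 1)) hu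
  have hp (j : Fin n) := congrArg (· (0, Pi.single j 1, 0)) hu
  simp [exteriorDeriv_pcForm_apply hH, Pi.single_apply] at hq hp
  refine Prod.ext (by simp [ZH]) (Prod.ext (funext fun j ↦ ?_) (funext fun j ↦ ?_))
  · simp [ZH]
    linarith [hq j]
  · simp [ZH]
    linarith [hp j]

theorem contDiff_pcForm {m : WithTop ℕ∞} (hH : ContDiff ℝ m H) : ContDiff ℝ m (pcForm H) := by
  unfold pcForm
  fun_prop

theorem contDiff_ZH {m k : WithTop ℕ∞} (hH : ContDiff ℝ k H) (hmk : m + 1 ≤ k) :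
    ContDiff ℝ m (ZH H) := by
  have hDH := hH.fderiv_right hmk
  exact contDiff_const.prodMk ((contDiff_pi.2 fun i ↦ hDH.clm_apply contDiff_const).prodMk
    (contDiff_pi.2 fun i ↦ (hDH.clm_apply contDiff_const).neg))

theorem exteriorDeriv_pcForm_apply_ZH (hH : DifferentiableAt ℝ H x) (v : EE n) :
    exteriorDeriv (pcForm H) x v (ZH H x) = 0 := by
  rw [exteriorDeriv_apply_swap, exteriorDeriv_pcForm_ZH hH, zero_apply, neg_zero]

def modifiedField (H : EE n → ℝ) (ζ : EE n → EE n) (y : EE n) : EE n :=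
  ζ y - (ζ y).1 • ZH H y

theorem modifiedField_fst (ζ : EE n → EE n) (y : EE n) : (modifiedField H ζ y).1 = 0 := by
  simp [modifiedField, ZH]

theorem exteriorDeriv_pcForm_modifiedField (hH : DifferentiableAt ℝ H x) (ζ : EE n → EE n) :
    exteriorDeriv (pcForm H) x (modifiedField H ζ x) = exteriorDeriv (pcForm H) x (ζ x) := by
  simp [modifiedField, exteriorDeriv_pcForm_ZH hH]

theorem exteriorDeriv_pcForm_modifiedField_modifiedField (hH : DifferentiableAt ℝ H x)
    (ζ₁ ζ₂ : EE n → EE n) :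
    exteriorDeriv (pcForm H) x (modifiedField H ζ₁ x) (modifiedField H ζ₂ x) =
      exteriorDeriv (pcForm H) x (ζ₁ x) (ζ₂ x) := by
  rw [exteriorDeriv_pcForm_modifiedField hH, modifiedField, map_sub, map_smul,
    exteriorDeriv_pcForm_apply_ZH hH, smul_zero, sub_zero]

theorem exteriorDeriv_pcForm_lieBracket (hH : ContDiff ℝ 2 H) {X Y : EE n → EE n}
    (hX : DifferentiableAt ℝ X x) (hY : DifferentiableAt ℝ Y x)
    (hXc : IsClosedAt (fun y ↦ exteriorDeriv (pcForm H) y (X y)) x)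
    (hYc : IsClosedAt (fun y ↦ exteriorDeriv (pcForm H) y (Y y)) x) :
    exteriorDeriv (pcForm H) x (lieBracket ℝ X Y x) =
      -fderiv ℝ (fun y ↦ exteriorDeriv (pcForm H) y (X y) (Y y)) x :=
  have hα := contDiff_pcForm hH
  exteriorDeriv_lieBracket ((hα.fderiv_right (m := 1) le_rfl).differentiable one_ne_zero x)
    (hα.contDiffAt.isSymmSndFDerivAt (by simp)) hX hY hXc hYc

theorem lieBracket_eq_zero_of_fderiv_exteriorDeriv_pcForm_eq_zero (hH : ContDiff ℝ 2 H)
    {X Y : EE n → EE n} {a b : ℝ} (hX : DifferentiableAt ℝ X x) (hY : DifferentiableAt ℝ Y x)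
    (hX₁ : ∀ y, (X y).1 = a) (hY₁ : ∀ y, (Y y).1 = b)
    (hXc : IsClosedAt (fun y ↦ exteriorDeriv (pcForm H) y (X y)) x)
    (hYc : IsClosedAt (fun y ↦ exteriorDeriv (pcForm H) y (Y y)) x)
    (hXY : fderiv ℝ (fun y ↦ exteriorDeriv (pcForm H) y (X y) (Y y)) x = 0) :
    lieBracket ℝ X Y x = 0 := by
  have hker : exteriorDeriv (pcForm H) x (lieBracket ℝ X Y x) = 0 := by
    rw [exteriorDeriv_pcForm_lieBracket hH hX hY hXc hYc, hXY, neg_zero]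
  have hfst : (lieBracket ℝ X Y x).1 = 0 :=
    apply_lieBracket_eq_zero_of_apply_eq (ContinuousLinearMap.fst ℝ ℝ _) hX hY hX₁ hY₁
  rw [eq_smul_ZH_of_exteriorDeriv_pcForm_eq_zero (hH.differentiable two_ne_zero x) hker, hfst,
    zero_smul]

theorem differentiable_modifiedField (hH : ContDiff ℝ 2 H) {ζ : EE n → EE n}
    (hζ : Differentiable ℝ ζ) : Differentiable ℝ (modifiedField H ζ) :=
  hζ.sub (hζ.fst.smul ((contDiff_ZH hH one_add_one_eq_two.le).differentiable one_ne_zero))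

theorem isClosedAt_exteriorDeriv_pcForm_modifiedField (hH : ContDiff ℝ 2 H) {ζ : EE n → EE n}
    (hζ : ContDiff ℝ 2 ζ) (hsym : ∀ y, lieDeriv ζ (pcForm H) y = 0) (x : EE n) :
    IsClosedAt (fun y ↦ exteriorDeriv (pcForm H) y (modifiedField H ζ y)) x := by
  simp only [exteriorDeriv_pcForm_modifiedField (hH.differentiable two_ne_zero _)]
  exact isClosedAt_exteriorDeriv_apply_of_lie_eq_zero (contDiff_pcForm hH) hζ (by simp) hsym x

theorem lieBracket_ZH_modifiedField (hH : ContDiff ℝ 2 H) {ζ : EE n → EE n}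
    (hζ : ContDiff ℝ 2 ζ) (hsym : ∀ y, lieDeriv ζ (pcForm H) y = 0) (x : EE n) :
    lieBracket ℝ (ZH H) (modifiedField H ζ) x = 0 := by
  have hZ (y : EE n) : exteriorDeriv (pcForm H) y (ZH H y) = 0 :=
    exteriorDeriv_pcForm_ZH (hH.differentiable two_ne_zero y)
  refine lieBracket_eq_zero_of_fderiv_exteriorDeriv_pcForm_eq_zero hH
    ((contDiff_ZH hH one_add_one_eq_two.le).differentiable one_ne_zero x)
    (differentiable_modifiedField hH (hζ.differentiable two_ne_zero) x) (fun _ ↦ rfl)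
    (modifiedField_fst ζ) (fun u v ↦ by simp [hZ])
    (isClosedAt_exteriorDeriv_pcForm_modifiedField hH hζ hsym x) (by simp [hZ])

theorem lieBracket_modifiedField_modifiedField (hH : ContDiff ℝ 2 H) {ζ₁ ζ₂ : EE n → EE n}
    (hζ₁ : ContDiff ℝ 2 ζ₁) (hζ₂ : ContDiff ℝ 2 ζ₂) (hsym₁ : ∀ y, lieDeriv ζ₁ (pcForm H) y = 0)
    (hsym₂ : ∀ y, lieDeriv ζ₂ (pcForm H) y = 0) (hcomm : ∀ y, lieBracket ℝ ζ₁ ζ₂ y = 0)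
    (x : EE n) :
    lieBracket ℝ (modifiedField H ζ₁) (modifiedField H ζ₂) x = 0 := by
  have hclosed {ζ : EE n → EE n} (hζ : ContDiff ℝ 2 ζ) (hsym : ∀ y, lieDeriv ζ (pcForm H) y = 0) :
      IsClosedAt (fun y ↦ exteriorDeriv (pcForm H) y (ζ y)) x :=
    isClosedAt_exteriorDeriv_apply_of_lie_eq_zero (contDiff_pcForm hH) hζ (by simp) hsym x
  have hconst : fderiv ℝ (fun y ↦ exteriorDeriv (pcForm H) y (ζ₁ y) (ζ₂ y)) x = 0 := by
    rw [← neg_eq_zero, ← exteriorDeriv_pcForm_lieBracket hH (hζ₁.differentiable two_ne_zero x)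
      (hζ₂.differentiable two_ne_zero x) (hclosed hζ₁ hsym₁) (hclosed hζ₂ hsym₂), hcomm, map_zero]
  refine lieBracket_eq_zero_of_fderiv_exteriorDeriv_pcForm_eq_zero hH
    (differentiable_modifiedField hH (hζ₁.differentiable two_ne_zero) x)
    (differentiable_modifiedField hH (hζ₂.differentiable two_ne_zero) x)
    (modifiedField_fst ζ₁) (modifiedField_fst ζ₂)
    (isClosedAt_exteriorDeriv_pcForm_modifiedField hH hζ₁ hsym₁ x)
    (isClosedAt_exteriorDeriv_pcForm_modifiedField hH hζ₂ hsym₂ x) ?_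
  simpa only [exteriorDeriv_pcForm_modifiedField_modifiedField
    (hH.differentiable two_ne_zero _)] using hconst

end PhaseSpace

theorem modified_symmetries_commute_general {n : ℕ}
    (H : EE n → ℝ) (hH : ContDiff ℝ ∞ H)
    (ζ₁ ζ₂ : EE n → EE n) (hζ₁ : ContDiff ℝ ∞ ζ₁) (hζ₂ : ContDiff ℝ ∞ ζ₂)
    (hsym₁ : ∀ x, lieDeriv ζ₁ (pcForm H) x = 0)
    (hsym₂ : ∀ x, lieDeriv ζ₂ (pcForm H) x = 0)
    (hcomm : ∀ x, vbracket ζ₁ ζ₂ x = 0) :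
    (∀ x, vbracket (ZH H) (fun y => ζ₁ y - (ζ₁ y).1 • ZH H y) x = 0) ∧
    (∀ x, vbracket (ZH H) (fun y => ζ₂ y - (ζ₂ y).1 • ZH H y) x = 0) ∧
    (∀ x, vbracket (fun y => ζ₁ y - (ζ₁ y).1 • ZH H y)
        (fun y => ζ₂ y - (ζ₂ y).1 • ZH H y) x = 0) := by
  have h2 : (2 : WithTop ℕ∞) ≤ ∞ := WithTop.coe_le_coe.2 le_top
  exact ⟨lieBracket_ZH_modifiedField (hH.of_le h2) (hζ₁.of_le h2) hsym₁,
    lieBracket_ZH_modifiedField (hH.of_le h2) (hζ₂.of_le h2) hsym₂,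
    lieBracket_modifiedField_modifiedField (hH.of_le h2) (hζ₁.of_le h2) (hζ₂.of_le h2) hsym₁ hsym₂
      hcomm⟩

/-- if `ζ₁, ζ₂` are commuting Noether symmetries (`L_{ζₖ} α_H = 0`,
`[ζ₁,ζ₂] = 0`) with time components `τₖ = (ζₖ)₁`, then the modified fields
`ζ̃ₖ = ζₖ − τₖ • Z_H` satisfy `[Z_H, ζ̃₁] = [Z_H, ζ̃₂] = [ζ̃₁, ζ̃₂] = 0` on `E`. -/
theorem modified_symmetries_commute {n : ℕ} (hn : 1 ≤ n)
    (H : EE n → ℝ) (hH : ContDiff ℝ ∞ H)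
    (ζ₁ ζ₂ : EE n → EE n) (hζ₁ : ContDiff ℝ ∞ ζ₁) (hζ₂ : ContDiff ℝ ∞ ζ₂)
    (hsym₁ : ∀ x, lieDeriv ζ₁ (pcForm H) x = 0)
    (hsym₂ : ∀ x, lieDeriv ζ₂ (pcForm H) x = 0)
    (hcomm : ∀ x, vbracket ζ₁ ζ₂ x = 0) :
    (∀ x, vbracket (ZH H) (fun y => ζ₁ y - (ζ₁ y).1 • ZH H y) x = 0) ∧
    (∀ x, vbracket (ZH H) (fun y => ζ₂ y - (ζ₂ y).1 • ZH H y) x = 0) ∧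
    (∀ x, vbracket (fun y => ζ₁ y - (ζ₁ y).1 • ZH H y)
        (fun y => ζ₂ y - (ζ₂ y).1 • ZH H y) x = 0) :=
  modified_symmetries_commute_general H hH ζ₁ ζ₂ hζ₁ hζ₂ hsym₁ hsym₂ hcomm
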